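/- Let F have characteristic p > 0, let m = \u2308log_p r\u2309 (so p^{m-1} < r \u2264 p^m), and suppose r \u2264 s. If the Jordan partition \u03bb(r,s,p) of J_r \u2297 J_s equals the uniform partition (s, \u2026, s), then s \u2261 0 (mod p^m). -/

import Mathlib

open Matrix Kronecker

/-- The `k × k` upper-triangular Jordan block with eigenvalue `1`. -/
def jordanBlock (F : Type*) [Zero F] [One F] (k : ℕ) : Matrix (Fin k) (Fin k) F :=
  Matrix.of fun i j => if j = i then 1 else if (j : ℕ) = (i : ℕ) + 1 then 1 else 0

/-- `lam : Fin r → ℕ` is the Jordan partition of the square matrix `M`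
(with eigenvalue 1), characterized by: `lam` is weakly decreasing with positive
parts, and for every `k` the rank of `(M - 1)^k` equals `∑ i, max (lam i - k) 0`.
Over a field this holds iff `M` is similar to the direct sum of the unipotent
Jordan blocks `J_{lam i}`. -/
def IsJordanSeq {F : Type*} [CommRing F] {n : Type*} [Fintype n] [DecidableEq n]
    {r : ℕ} (M : Matrix n n F) (lam : Fin r → ℕ) : Prop :=
  Antitone lam ∧ (∀ i, 0 < lam i) ∧
    ∀ k : ℕ, ((M - 1) ^ k).rank = ∑ i, (lam i - k)

/-!
If all Jordan blocks of `M = J_r ⊗ J_s` have size `s`, then `(M - 1)^s = 0`. For `a = p^j < r`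
the entry of `(M - 1)^s` in row `(0, a - 1)` and column `(a, s - 1)` is the `s`-th forward
difference at `0` of `k ↦ C(k, a) C(k, s - a)`, a polynomial of degree `s` with leading
coefficient `1 / (a! (s - a)!)`; so this entry is `C(s, a)`. Hence `p ∣ C(s, p^j)` for all
`j < m`, and Lucas' theorem turns this into `p^m ∣ s`.
-/

open Finset fwdDiff
open scoped Nat

theorem alternating_sum_range_choose_mul_choose_mul_choose (a b : ℕ) :
    ∑ k ∈ range (a + b + 1),
      (-1 : ℤ) ^ (a + b - k) * (a + b).choose k * (k.choose a * k.choose b) = (a + b).choose a := by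
  have hmonic : (descPochhammer ℤ a * descPochhammer ℤ b).Monic :=
    (monic_descPochhammer ℤ a).mul (monic_descPochhammer ℤ b)
  have h := congrFun (Polynomial.fwdDiff_iter_degree_eq_factorial
    (descPochhammer ℤ a * descPochhammer ℤ b)) 0
  rw [fwdDiff_iter_eq_sum_shift, hmonic.leadingCoeff,
    (monic_descPochhammer ℤ a).natDegree_mul (monic_descPochhammer ℤ b),
    descPochhammer_natDegree, descPochhammer_natDegree] at h
  simp only [Polynomial.eval_mul, descPochhammer_eval_eq_descFactorial,
    Nat.descFactorial_eq_factorial_mul_choose, zero_add, nsmul_eq_mul, mul_one, one_smul,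
    smul_eq_mul, Pi.natCast_apply] at h
  have hfact : a ! * b ! * (a + b).choose a = (a + b)! := by
    rw [← Nat.choose_mul_factorial_mul_factorial (Nat.le_add_right a b), Nat.add_sub_cancel_left]
    ring
  refine mul_left_cancel₀ (by positivity : ((a ! * b ! : ℕ) : ℤ) ≠ 0) ?_
  rw [mul_sum, ← Nat.cast_mul, hfact, ← h]
  refine sum_congr rfl fun k _ => ?_
  push_cast
  ring

theorem Nat.pow_dvd_of_forall_dvd_choose_pow {p m s : ℕ} [Fact p.Prime]
    (h : ∀ j < m, p ∣ s.choose (p ^ j)) : p ^ m ∣ s := by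
  induction m with
  | zero => simp
  | succ m ih =>
    obtain ⟨t, rfl⟩ := ih fun j hj => h j (by omega)
    have hlucas : (p ^ m * t).choose (p ^ m * 1) ≡ t.choose 1 [MOD p] :=
      Choose.choose_pow_mul_pow_mul_modEq_choose_nat
    rw [mul_one, Nat.choose_one_right] at hlucas
    rw [pow_succ]
    exact mul_dvd_mul_left _ ((hlucas.dvd_iff dvd_rfl).mp (h m m.lt_succ_self))

namespace Matrix

theorem eq_zero_of_rank_eq_zero {K m n : Type*} [Field K] [Fintype n] [DecidableEq n]
    {A : Matrix m n K} (h : A.rank = 0) : A = 0 := by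
  rw [Matrix.rank, Submodule.finrank_eq_zero, LinearMap.range_eq_bot] at h
  exact Matrix.toLin'.injective (by simpa [Matrix.toLin'_apply'] using h)

theorem kronecker_pow {R l m : Type*} [CommSemiring R] [Fintype l] [Fintype m]
    [DecidableEq l] [DecidableEq m]
    (A : Matrix l l R) (B : Matrix m m R) (k : ℕ) : (A ⊗ₖ B) ^ k = (A ^ k) ⊗ₖ (B ^ k) := by
  induction k with
  | zero => simp
  | succ k ih => rw [pow_succ, pow_succ, pow_succ, ih, mul_kronecker_mul]

variable {R n : Type*} [Ring R] [Fintype n] [DecidableEq n]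

theorem fwdDiff_iter_pow_apply (A : Matrix n n R) (P Q : n) (t : ℕ) :
    (Δ_[1])^[t] (fun k : ℕ => (A ^ k) P Q) = fun k => ((A - 1) ^ t * A ^ k) P Q := by
  induction t with
  | zero => simp
  | succ t ih =>
    ext k
    simp only [Function.iterate_succ_apply', ih, fwdDiff, ← sub_apply, ← mul_sub]
    rw [pow_succ (A - 1), mul_assoc, sub_mul, one_mul, pow_succ']

theorem sub_one_pow_apply (A : Matrix n n R) (P Q : n) (t : ℕ) :
    ((A - 1) ^ t) P Q =
      ∑ k ∈ range (t + 1), (-1 : R) ^ (t - k) * t.choose k * (A ^ k) P Q := by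
  have h := congrFun (fwdDiff_iter_pow_apply A P Q t) 0
  rw [fwdDiff_iter_eq_sum_shift, pow_zero, mul_one] at h
  rw [← h]
  refine sum_congr rfl fun k _ => ?_
  simp [zsmul_eq_mul]

end Matrix

section JordanBlock

variable {R : Type*} [Ring R] {n : ℕ}

theorem jordanBlock_sub_one_apply (i j : Fin n) :
    (jordanBlock R n - 1) i j = if (j : ℕ) = i + 1 then 1 else 0 := by
  by_cases h : j = i
  · simp [jordanBlock, h]
  · simp [jordanBlock, h, one_apply_ne' h]

theorem jordanBlock_sub_one_pow_apply (t : ℕ) (i j : Fin n) :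
    ((jordanBlock R n - 1) ^ t) i j = if (j : ℕ) = i + t then 1 else 0 := by
  induction t generalizing j with
  | zero => simp [one_apply, Fin.ext_iff, eq_comm]
  | succ t ih =>
    rw [pow_succ, mul_apply]
    simp_rw [ih, jordanBlock_sub_one_apply, ite_mul, one_mul, zero_mul]
    rw [Fin.sum_univ_eq_sum_range
      (fun l => if l = ↑i + t then if (j : ℕ) = l + 1 then (1 : R) else 0 else 0), sum_ite_eq']
    have := j.isLt
    simp only [mem_range]
    split_ifs <;> first | rfl | omega

theorem jordanBlock_pow_apply (k : ℕ) {i j : Fin n} (hij : i ≤ j) :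
    (jordanBlock R n ^ k) i j = k.choose (j - i) := by
  have hshift (m : ℕ) : (j : ℕ) = i + m ↔ j - i = m := by rw [Fin.le_def] at hij; omega
  rw [← sub_add_cancel (jordanBlock R n) 1, (Commute.one_right _).add_pow, Matrix.sum_apply]
  simp_rw [one_pow, mul_one, ← Nat.cast_comm, ← nsmul_eq_mul, Matrix.smul_apply,
    jordanBlock_sub_one_pow_apply, hshift, smul_ite, smul_zero, sum_ite_eq, mem_range]
  split_ifs with hk
  · simp
  · rw [Nat.choose_eq_zero_of_lt (by omega), Nat.cast_zero]

theorem jordanBlock_kronecker_sub_one_pow_apply {R : Type*} [CommRing R] {r s a : ℕ} (ha : 0 < a) (har : a < r)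
    (has : a ≤ s) :
    ((jordanBlock R r ⊗ₖ jordanBlock R s - 1) ^ s)
      (⟨0, by omega⟩, ⟨a - 1, by omega⟩) (⟨a, har⟩, ⟨s - 1, by omega⟩) = s.choose a := by
  have hentry (k : ℕ) : ((jordanBlock R r ⊗ₖ jordanBlock R s) ^ k)
      (⟨0, by omega⟩, ⟨a - 1, by omega⟩) (⟨a, har⟩, ⟨s - 1, by omega⟩) =
        k.choose a * k.choose (s - a) := by
    rw [Matrix.kronecker_pow, kroneckerMap_apply, jordanBlock_pow_apply k (by simp [Fin.le_def]),
      jordanBlock_pow_apply k (by simp [Fin.le_def]; omega)]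
    congr 3
    dsimp only
    omega
  have h := alternating_sum_range_choose_mul_choose_mul_choose a (s - a)
  rw [Nat.add_sub_cancel' has] at h
  rw [Matrix.sub_one_pow_apply]
  simp_rw [hentry]
  exact_mod_cast congrArg (Int.cast : ℤ → R) h

end JordanBlock

theorem stmt10_general (F : Type*) [Field F] (p : ℕ) [CharP F p] (hp : p.Prime)
    (m r s : ℕ) (hm : p ^ (m - 1) < r) (hrs : r ≤ s)
    (huni : IsJordanSeq (jordanBlock F r ⊗ₖ jordanBlock F s) (fun _ : Fin r => s)) :
    p ^ m ∣ s := by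
  obtain ⟨-, -, hrank⟩ := huni
  have hnil : (jordanBlock F r ⊗ₖ jordanBlock F s - 1) ^ s = 0 :=
    Matrix.eq_zero_of_rank_eq_zero (by simp [hrank s])
  have : Fact p.Prime := ⟨hp⟩
  refine Nat.pow_dvd_of_forall_dvd_choose_pow fun j hj => ?_
  have hjr : p ^ j < r := (Nat.pow_le_pow_right hp.pos (by omega)).trans_lt hm
  rw [← CharP.cast_eq_zero_iff F p, ← jordanBlock_kronecker_sub_one_pow_apply
    (pow_pos hp.pos j) hjr (hjr.le.trans hrs), hnil, Matrix.zero_apply]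

/-- If `p^{m-1} < r ≤ p^m ` and the Jordan partition of `J_r ⊗ J_s` is the
uniform partition `(s, …, s)`, then `p^m ∣ s`. -/
theorem stmt10 (F : Type*) [Field F] (p : ℕ) [CharP F p] (hp : p.Prime)
    (m r s : ℕ) (hm : p ^ (m - 1) < r) (hrpm : r ≤ p ^ m) (hrs : r ≤ s)
    (huni : IsJordanSeq (jordanBlock F r ⊗ₖ jordanBlock F s) (fun _ : Fin r => s)) :
    p ^ m ∣ s :=
  stmt10_general F p hp m r s hm hrs huni
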